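/- Every maximal clique in the enhanced power graph of a group G is a subgroup of G which is locally cyclic (every finitely generated subgroup of it is cyclic). -/

import Mathlib

/-- The enhanced power graph of a group: distinct `x, y` are adjacent iff `⟨x, y⟩` is cyclic. -/
def enhancedPowerGraph (G : Type*) [Group G] : SimpleGraph G where
  Adj x y := x ≠ y ∧ IsCyclic ↥(Subgroup.closure ({x, y} : Set G))
  symm := by
    constructor
    rintro x y ⟨h, hc⟩
    exact ⟨h.symm, by rwa [Set.pair_comm]⟩
  loopless := by constructor; rintro x ⟨h, _⟩; exact h rfl

/-!
A set `t` of pairwise adjacent elements generates a commutative group, finitely generated when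
`t` is finite. If that group were not cyclic, the structure theorem would give a surjection onto
`ℤ/p × ℤ/p` for some prime `p`; there every cyclic subgroup has order at most `p`, so the images
of the elements of `t` would all lie in one line and could not generate. Hence a clique is
locally cyclic, so the subgroup it generates is again a clique, and a maximal clique equals it.
-/

open Subgroup Function

theorem Pi.exists_addMonoidHom_prod_surjective {ι : Type*} {M : ι → Type*}
    [∀ i, AddZeroClass (M i)] {N₁ N₂ : Type*} [AddZeroClass N₁] [AddZeroClass N₂] {i j : ι}
    (hij : i ≠ j) {f : M i →+ N₁} {g : M j →+ N₂} (hf : Surjective f) (hg : Surjective g) :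
    ∃ φ : (∀ k, M k) →+ N₁ × N₂, Surjective φ := by
  classical
  refine ⟨(f.comp (Pi.evalAddMonoidHom M i)).prod (g.comp (Pi.evalAddMonoidHom M j)), ?_⟩
  rintro ⟨a, b⟩
  obtain ⟨a, rfl⟩ := hf a
  obtain ⟨b, rfl⟩ := hg b
  exact ⟨Pi.single i a + Pi.single j b, by simp [hij, hij.symm]⟩

theorem isAddCyclic_pi_zmod_of_pairwise_coprime {ι : Type*} [Fintype ι] {m : ι → ℕ}
    (hm : Pairwise (Nat.Coprime on m)) : IsAddCyclic (∀ i, ZMod (m i)) :=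
  (ZMod.prodEquivPi m hm).toAddEquiv.isAddCyclic.mp inferInstance

theorem exists_surjective_zmod_prod_of_not_isAddCyclic_free_prod {n : ℕ} {ι : Type*} [Fintype ι]
    {p e : ι → ℕ} (hp : ∀ i, (p i).Prime)
    (h : ¬IsAddCyclic ((Fin n → ℤ) × ∀ i, ZMod (p i ^ e i))) :
    ∃ q, q.Prime ∧ ∃ f : (Fin n → ℤ) × (∀ i, ZMod (p i ^ e i)) →+ ZMod q × ZMod q,
      Surjective f := by
  by_cases hrep : ∃ i j, i ≠ j ∧ e i ≠ 0 ∧ e j ≠ 0 ∧ p i = p j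
  · obtain ⟨i, j, hij, hi, hj, hpij⟩ := hrep
    have hdj : p i ∣ p j ^ e j := hpij ▸ dvd_pow_self _ hj
    obtain ⟨φ, hφ⟩ := Pi.exists_addMonoidHom_prod_surjective (M := fun k ↦ ZMod (p k ^ e k)) hij
      (f := (ZMod.castHom (dvd_pow_self _ hi) (ZMod (p i))).toAddMonoidHom)
      (g := (ZMod.castHom hdj (ZMod (p i))).toAddMonoidHom)
      (ZMod.ringHom_surjective _) (ZMod.ringHom_surjective _)
    exact ⟨p i, hp i, φ.comp (AddMonoidHom.snd _ _), hφ.comp Prod.snd_surjective⟩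
  have hcop : Pairwise (Nat.Coprime on fun i ↦ p i ^ e i) := by
    intro i j hij
    by_cases hi : e i = 0
    · simp [onFun, hi]
    by_cases hj : e j = 0
    · simp [onFun, hj]
    exact .pow _ _ ((Nat.coprime_primes (hp i) (hp j)).2 fun hpij ↦ hrep ⟨i, j, hij, hi, hj, hpij⟩)
  -- The torsion part is now cyclic, so a second independent direction must come from `ℤ`.
  match n, h with
  | 0, h =>
    exact absurd (AddEquiv.uniqueProd.isAddCyclic.mpr
      (isAddCyclic_pi_zmod_of_pairwise_coprime hcop)) h
  | 1, h =>
    by_cases htor : ∃ i, e i ≠ 0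
    · obtain ⟨i, hi⟩ := htor
      let f : ZMod (p i ^ e i) →+* ZMod (p i) := ZMod.castHom (dvd_pow_self _ hi) _
      refine ⟨p i, hp i, ((Int.castAddHom _).comp (Pi.evalAddMonoidHom _ 0)).prodMap
        (f.toAddMonoidHom.comp (Pi.evalAddMonoidHom _ i)), ?_⟩
      exact (ZMod.intCast_surjective.comp (surjective_eval (β := fun _ : Fin 1 ↦ ℤ) 0)).prodMap
        ((ZMod.ringHom_surjective f).comp (surjective_eval (β := fun k ↦ ZMod (p k ^ e k)) i))
    · push Not at htor
      have : ∀ i, Unique (ZMod (p i ^ e i)) := fun i ↦ by rw [htor i, pow_zero]; infer_instance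
      exact absurd ((AddEquiv.prodUnique.trans (AddEquiv.piUnique _)).isAddCyclic.mpr
        inferInstance) h
  | n + 2, _ =>
    obtain ⟨φ, hφ⟩ := Pi.exists_addMonoidHom_prod_surjective (M := fun _ : Fin (n + 2) ↦ ℤ)
      (i := 0) (j := 1) (by simp) (f := Int.castAddHom (ZMod 2)) (g := Int.castAddHom (ZMod 2))
      ZMod.intCast_surjective ZMod.intCast_surjective
    exact ⟨2, Nat.prime_two, φ.comp (AddMonoidHom.fst _ _), hφ.comp Prod.fst_surjective⟩

theorem exists_surjective_zmod_prod_of_not_isAddCyclic {A : Type*} [AddCommGroup A]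
    [AddGroup.FG A] (h : ¬IsAddCyclic A) :
    ∃ q, q.Prime ∧ ∃ f : A →+ ZMod q × ZMod q, Surjective f := by
  obtain ⟨n, ι, _, p, hp, e, ⟨φ⟩⟩ := AddCommGroup.equiv_free_prod_directSum_zmod A
  let ψ := φ.trans (Finsupp.addEquivFunOnFinite.prodCongr (DirectSum.addEquivProd _))
  obtain ⟨q, hq, f, hf⟩ :=
    exists_surjective_zmod_prod_of_not_isAddCyclic_free_prod hp fun hD ↦ h (ψ.isAddCyclic.mpr hD)
  exact ⟨q, hq, f.comp ψ.toAddMonoidHom, hf.comp ψ.surjective⟩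

theorem not_isCyclic_multiplicative_zmod_prod {p : ℕ} (hp : p.Prime) :
    ¬IsCyclic (Multiplicative (ZMod p × ZMod p)) := by
  rw [isCyclic_multiplicative_iff, AddGroup.isAddCyclic_prod_iff, Nat.card_zmod,
    Nat.coprime_self]
  exact fun h ↦ hp.ne_one h.2.2

theorem pow_eq_one_multiplicative_zmod_prod (p : ℕ) (v : Multiplicative (ZMod p × ZMod p)) :
    v ^ p = 1 := by
  rw [← toAdd_eq_zero, toAdd_pow]
  ext <;> simp

section

variable {G : Type*} [Group G]

theorem mem_zpowers_of_isCyclic_closure_pair {p : ℕ} (hp : p.Prime) (hG : ∀ g : G, g ^ p = 1)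
    {x y : G} (hx : x ≠ 1) (hxy : IsCyclic (closure {x, y})) : y ∈ zpowers x := by
  obtain ⟨g, hg⟩ := (closure {x, y}).isCyclic_iff_exists_zpowers_eq_top.mp hxy
  have hxg : x ∈ zpowers g := hg ▸ Subgroup.subset_closure (Set.mem_insert x {y})
  have hyg : y ∈ zpowers g := hg ▸ Subgroup.subset_closure (Set.mem_insert_of_mem x rfl)
  have hord : ∀ a : G, a ≠ 1 → orderOf a = p := fun a ha ↦
    ((Nat.dvd_prime hp).mp (orderOf_dvd_of_pow_eq_one (hG a))).resolve_left
      (mt orderOf_eq_one_iff.mp ha)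
  have hg1 : g ≠ 1 := by rintro rfl; exact hx (by simpa using hxg)
  have : Finite (zpowers g) := Nat.finite_of_card_ne_zero (by simp [hord g hg1, hp.ne_zero])
  rw [Subgroup.eq_of_le_of_card_ge (zpowers_le.mpr hxg)
    (by rw [Nat.card_zpowers, Nat.card_zpowers, hord x hx, hord g hg1])]
  exact hyg

theorem isCyclic_of_closure_eq_top_of_pow_prime_eq_one {p : ℕ} (hp : p.Prime)
    (hG : ∀ g : G, g ^ p = 1) {T : Set G} (hT : closure T = ⊤)
    (hpair : ∀ x ∈ T, ∀ y ∈ T, IsCyclic (closure {x, y})) : IsCyclic G := by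
  suffices ∃ x : G, T ⊆ zpowers x by
    obtain ⟨x, hx⟩ := this
    exact isCyclic_iff_exists_zpowers_eq_top.mpr ⟨x, eq_top_mono ((closure_le _).mpr hx) hT⟩
  by_cases htriv : ∀ x ∈ T, x = 1
  · exact ⟨1, fun y hy ↦ by simp [htriv y hy]⟩
  push Not at htriv
  obtain ⟨x, hxT, hx⟩ := htriv
  exact ⟨x, fun y hy ↦ mem_zpowers_of_isCyclic_closure_pair hp hG hx (hpair x hxT y hy)⟩

theorem isCyclic_of_closure_eq_top_of_pairwise {B : Type*} [CommGroup B] {S : Set B}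
    (hS : S.Finite) (hgen : closure S = ⊤)
    (hpair : ∀ x ∈ S, ∀ y ∈ S, IsCyclic (closure {x, y})) : IsCyclic B := by
  have : Group.FG B := Group.fg_iff.mpr ⟨S, hgen, hS⟩
  by_contra h
  obtain ⟨p, hp, f, hf⟩ :=
    exists_surjective_zmod_prod_of_not_isAddCyclic (isAddCyclic_additive_iff.not.mpr h)
  let φ : B →* Multiplicative (ZMod p × ZMod p) := AddMonoidHom.toMultiplicativeRight f
  refine not_isCyclic_multiplicative_zmod_prod hp
    (isCyclic_of_closure_eq_top_of_pow_prime_eq_one hp (pow_eq_one_multiplicative_zmod_prod p)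
      (T := φ '' S) ?_ ?_)
  · rw [← MonoidHom.map_closure, hgen, ← MonoidHom.range_eq_map, MonoidHom.range_eq_top]
    exact hf
  · rintro _ ⟨x, hx, rfl⟩ _ ⟨y, hy, rfl⟩
    have := hpair x hx y hy
    rw [← Set.image_pair, ← MonoidHom.map_closure]
    exact isCyclic_of_surjective _ (φ.subgroupMap_surjective _)

theorem commute_of_isCyclic_closure_pair {x y : G} (h : IsCyclic (closure {x, y})) :
    Commute x y := by
  obtain ⟨g, hg⟩ := (closure {x, y}).isCyclic_iff_exists_zpowers_eq_top.mp h
  have hx : x ∈ zpowers g := hg ▸ Subgroup.subset_closure (Set.mem_insert x {y})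
  have hy : y ∈ zpowers g := hg ▸ Subgroup.subset_closure (Set.mem_insert_of_mem x rfl)
  obtain ⟨a, rfl⟩ := mem_zpowers_iff.mp hx
  obtain ⟨b, rfl⟩ := mem_zpowers_iff.mp hy
  exact Commute.zpow_zpow_self g a b

theorem Subgroup.isCyclic_closure_of_isCyclic_closure_image_subtype {H : Subgroup G} {s : Set H}
    (h : IsCyclic (closure (H.subtype '' s))) : IsCyclic (closure s) := by
  rw [← MonoidHom.map_closure] at h
  exact ((closure s).equivMapOfInjective _ H.subtype_injective).isCyclic.mpr h

open scoped IsMulCommutative in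
theorem isCyclic_closure_of_pairwise {t : Set G} (ht : t.Finite)
    (hpair : ∀ x ∈ t, ∀ y ∈ t, IsCyclic (closure {x, y})) : IsCyclic (closure t) := by
  have := isMulCommutative_closure fun x hx y hy ↦
    (commute_of_isCyclic_closure_pair (hpair x hx y hy)).eq
  refine isCyclic_of_closure_eq_top_of_pairwise (S := (closure t).subtype ⁻¹' t)
    (ht.preimage Subtype.val_injective.injOn)
    (closure_preimage_eq_top t) fun x hx y hy ↦ ?_
  apply isCyclic_closure_of_isCyclic_closure_image_subtype
  rw [Set.image_pair]
  exact hpair x hx y hy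

theorem Subgroup.exists_finset_subset_of_mem_closure {s : Set G} {a : G} (h : a ∈ closure s) :
    ∃ t : Finset G, ↑t ⊆ s ∧ a ∈ closure (t : Set G) := by
  classical
  induction h using closure_induction with
  | mem x hx => exact ⟨{x}, by simpa using hx, subset_closure (by simp)⟩
  | one => exact ⟨∅, by simp, one_mem _⟩
  | mul x y _ _ hx hy =>
    obtain ⟨t₁, ht₁, hx⟩ := hx
    obtain ⟨t₂, ht₂, hy⟩ := hy
    refine ⟨t₁ ∪ t₂, by simpa using ⟨ht₁, ht₂⟩, mul_mem ?_ ?_⟩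
    · exact closure_mono (by simp) hx
    · exact closure_mono (by simp) hy
  | inv x _ hx =>
    obtain ⟨t, ht, hx⟩ := hx
    exact ⟨t, ht, inv_mem hx⟩

theorem isCyclic_closure_pair_of_isClique {s : Set G}
    (hs : (enhancedPowerGraph G).IsClique s) {x y : G} (hx : x ∈ s) (hy : y ∈ s) :
    IsCyclic (closure {x, y}) := by
  by_cases hxy : x = y
  · rw [hxy, Set.pair_eq_singleton, ← zpowers_eq_closure]
    infer_instance
  · exact (hs hx hy hxy).2

theorem isClique_closure_of_forall_finset_isCyclic {s : Set G}
    (h : ∀ t : Finset G, ↑t ⊆ s → IsCyclic (closure (t : Set G))) :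
    (enhancedPowerGraph G).IsClique (closure s : Set G) := by
  classical
  intro a ha b hb hab
  obtain ⟨t₁, ht₁, ha⟩ := exists_finset_subset_of_mem_closure ha
  obtain ⟨t₂, ht₂, hb⟩ := exists_finset_subset_of_mem_closure hb
  have := h (t₁ ∪ t₂) (by simpa using ⟨ht₁, ht₂⟩)
  have hab' : closure {a, b} ≤ closure ((t₁ ∪ t₂ : Finset G) : Set G) :=
    (closure_le _).mpr (Set.pair_subset (closure_mono (by simp) ha) (closure_mono (by simp) hb))
  exact ⟨hab, isCyclic_of_le hab'⟩
end

theorem maximal_clique_enhanced (G : Type*) [Group G] (s : Set G)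
    (hs : (enhancedPowerGraph G).IsClique s)
    (hmax : ∀ t : Set G, (enhancedPowerGraph G).IsClique t → s ⊆ t → s = t) :
    (∃ H : Subgroup G, (H : Set G) = s) ∧
      ∀ t : Finset G, (↑t : Set G) ⊆ s →
        IsCyclic ↥(Subgroup.closure (↑t : Set G)) := by
  have hloc : ∀ t : Finset G, ↑t ⊆ s → IsCyclic (closure (t : Set G)) := fun t hts ↦
    isCyclic_closure_of_pairwise t.finite_toSet fun x hx y hy ↦
      isCyclic_closure_pair_of_isClique hs (hts hx) (hts hy)
  exact ⟨⟨closure s, (hmax _ (isClique_closure_of_forall_finset_isCyclic hloc)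
    subset_closure).symm⟩, hloc⟩
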